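/- Assume that for every ε > 0 there exists D_ε such that every real quadratic field discriminant D > D_ε admits an odd prime p with (D/p) = 1 and (1/2)√D ≤ p ≤ (1/2 + ε)√D. Then limsup_{D→∞} H_min(D)/√D ≤ 1/2, where D runs through the discriminants of real quadratic fields; that is, for every ε > 0 there is a bound B such that every real quadratic field discriminant D > B satisfies H_min(D)/√D ≤ 1/2 + ε. -/

import Mathlib

open NumberField IntermediateField

/-! Write `D = disc K` and take `p` from the hypothesis. As `D` is a square modulo `p` and
modulo `4`, there is `b` with `|b| ≤ p` and `b² ≡ D (mod 4p)`; put `c = (b² - D) / (4p)`.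
The root `α = (-b + √D) / (2p)` of `p x² + b x + c` generates `K`, the polynomial is primitive
because `p ∤ D`, and `D ≤ 4p²` forces `|c| ≤ p`, so `H(α) ≤ p ≤ (1/2 + ε)√D`.
Inside `K`, `√D = 2ω - y` for an integral basis `(1, ω)` with `ω² = x + yω`, and then
`D = y² + 4x` is a square modulo `4`. -/

theorem Module.Basis.exists_basis_zero_eq_of_isCoprime {R M : Type*} [CommRing R]
    [AddCommGroup M] [Module R M] (e : Basis (Fin 2) R M) {v : M}
    (hv : IsCoprime (e.repr v 0) (e.repr v 1)) : ∃ b : Basis (Fin 2) R M, b 0 = v := by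
  obtain ⟨x, y, hxy⟩ := hv
  have hdet : e.det ![v, -y • e 0 + x • e 1] = 1 := by
    rw [e.det_apply, Matrix.det_fin_two]
    simpa [Basis.toMatrix_apply, mul_comm] using hxy
  obtain ⟨hli, hspan⟩ := e.is_basis_iff_det.mpr (hdet ▸ isUnit_one)
  exact ⟨Basis.mk hli hspan.ge, by simp⟩

theorem Module.Basis.isCoprime_repr_one {S : Type*} [CommRing S] (e : Basis (Fin 2) ℤ S) :
    IsCoprime (e.repr 1 0) (e.repr 1 1) := by
  have := Module.Free.of_basis e
  have := Module.Finite.of_basis e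
  rw [Int.isCoprime_iff_gcd_eq_one]
  have h0 := Int.gcd_dvd_left (e.repr 1 0) (e.repr 1 1)
  have h1 := Int.gcd_dvd_right (e.repr 1 0) (e.repr 1 1)
  generalize Int.gcd _ _ = g at h0 h1 ⊢
  obtain ⟨a, ha⟩ := h0
  obtain ⟨b, hb⟩ := h1
  have hunit : IsUnit (algebraMap ℤ S g) := by
    refine IsUnit.of_mul_eq_one (a • e 0 + b • e 1) ?_
    conv_rhs => rw [← e.sum_repr 1, Fin.sum_univ_two, ha, hb]
    simp only [mul_add, Algebra.mul_smul_comm, Algebra.algebraMap_eq_smul_one, smul_mul_assoc,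
      one_mul, smul_smul, mul_comm]
  have hnorm := hunit.map (Algebra.norm ℤ)
  rwa [Algebra.norm_algebraMap, Module.finrank_eq_card_basis e, Fintype.card_fin,
    isUnit_pow_iff two_ne_zero, Int.ofNat_isUnit, Nat.isUnit_iff] at hnorm

theorem Algebra.discr_eq_of_basis_zero_eq_one {R S : Type*} [CommRing R] [CommRing S]
    [Algebra R S] (b : Module.Basis (Fin 2) R S) (hb : b 0 = 1) :
    Algebra.discr R b = b.repr (b 1 ^ 2) 1 ^ 2 + 4 * b.repr (b 1 ^ 2) 0 := by
  set x := b.repr (b 1 ^ 2) 0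
  set y := b.repr (b 1 ^ 2) 1
  have hsq : b 1 ^ 2 = x • 1 + y • b 1 := by
    rw [← hb, ← Fin.sum_univ_two (fun i => b.repr (b 1 ^ 2) i • b i), b.sum_repr]
  have htrace (z : S) : Algebra.trace R S z = b.repr z 0 + b.repr (z * b 1) 1 := by
    rw [Algebra.trace_eq_matrix_trace b, Matrix.trace_fin_two, Algebra.leftMulMatrix_eq_repr_mul,
      Algebra.leftMulMatrix_eq_repr_mul, hb, mul_one]
  have htr_one : Algebra.trace R S 1 = 2 := by
    rw [htrace, one_mul, ← hb, b.repr_self, b.repr_self, Finsupp.single_eq_same,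
      Finsupp.single_eq_same, one_add_one_eq_two]
  have htr_gen : Algebra.trace R S (b 1) = y := by
    rw [htrace, ← sq]; simp [y]
  have htr_sq : Algebra.trace R S (b 1 ^ 2) = 2 * x + y ^ 2 := by
    rw [hsq, map_add, map_smul, map_smul, htr_one, htr_gen, smul_eq_mul, smul_eq_mul]; ring
  rw [Algebra.discr_def, Matrix.det_fin_two]
  simp only [Algebra.traceMatrix_apply, Algebra.traceForm_apply, hb, one_mul, mul_one, ← sq,
    one_pow, htr_one, htr_gen, htr_sq]
  ring

theorem IntermediateField.adjoin_simple_eq_top_of_finrank_eq_two {F E : Type*} [Field F]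
    [Field E] [Algebra F E] (h2 : Module.finrank F E = 2) {x : E}
    (hx : x ∉ (⊥ : IntermediateField F E)) : F⟮x⟯ = ⊤ :=
  have := isSimpleOrder_of_finrank_prime F E (h2 ▸ Nat.prime_two)
  (eq_bot_or_eq_top F⟮x⟯).resolve_left (adjoin_simple_eq_bot_iff.not.mpr hx)

theorem exists_adjoin_eq_top_of_sq_eq_discrim {K : Type*} [Field K] [CharZero K] {s : K}
    (hs : ℚ⟮s⟯ = ⊤) {a b c : ℤ} (ha : a ≠ 0) (hdisc : s ^ 2 = discrim (a : K) b c) :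
    ∃ α : K, ℚ⟮α⟯ = ⊤ ∧ (a : K) * α ^ 2 + b * α + c = 0 := by
  have ha' : (a : K) ≠ 0 := Int.cast_ne_zero.mpr ha
  set α : K := (-b + s) / (2 * a)
  refine ⟨α, ?_, ?_⟩
  · have hsα : s = ((2 * a : ℤ) : K) * α + b := by simp only [α]; push_cast; field_simp; ring
    rw [eq_top_iff, ← hs, adjoin_simple_le_iff, hsα]
    exact add_mem (mul_mem (intCast_mem _ (2 * a)) (mem_adjoin_simple_self ℚ α)) (intCast_mem _ b)
  · have hroot := (quadratic_eq_zero_iff (b := (b : K)) (c := (c : K)) ha' (s := s)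
      (by rw [← sq, hdisc]) α).mpr (Or.inl rfl)
    linear_combination hroot

theorem NumberField.RingOfIntegers.exists_intCast_eq_of_mem_bot {K : Type*} [Field K]
    [NumberField K] {x : 𝓞 K} (hx : (x : K) ∈ (⊥ : IntermediateField ℚ K)) :
    ∃ m : ℤ, x = m := by
  obtain ⟨q, hq⟩ := mem_bot.mp hx
  have hint : IsIntegral ℤ q := by
    rw [← isIntegral_algebraMap_iff (algebraMap ℚ K).injective, hq]
    exact x.isIntegral_coe
  obtain ⟨m, rfl⟩ := IsIntegrallyClosed.isIntegral_iff.mp hint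
  exact ⟨m, RingOfIntegers.coe_injective (by simpa using hq.symm)⟩

theorem NumberField.exists_sq_eq_discr {K : Type*} [Field K] [NumberField K]
    (h2 : Module.finrank ℚ K = 2) :
    ∃ s : K, ℚ⟮s⟯ = ⊤ ∧ s ^ 2 = discr K ∧ ∃ y : ℤ, discr K ≡ y ^ 2 [ZMOD 4] := by
  have hrk : Module.finrank ℤ (𝓞 K) = 2 := (RingOfIntegers.rank K).trans h2
  let e := Module.finBasisOfFinrankEq ℤ (𝓞 K) hrk
  obtain ⟨b, hb⟩ := e.exists_basis_zero_eq_of_isCoprime e.isCoprime_repr_one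
  set x := b.repr (b 1 ^ 2) 0
  set y := b.repr (b 1 ^ 2) 1
  have hdiscr : discr K = y ^ 2 + 4 * x := by
    rw [← discr_eq_discr K b, Algebra.discr_eq_of_basis_zero_eq_one b hb]
  have hsq : b 1 ^ 2 = x + y * b 1 := by
    conv_lhs => rw [← b.sum_repr (b 1 ^ 2), Fin.sum_univ_two, hb]
    rw [zsmul_eq_mul, zsmul_eq_mul, mul_one]
  refine ⟨2 * (b 1 : K) - y, ?_, ?_, y, ?_⟩
  · refine adjoin_simple_eq_top_of_finrank_eq_two h2 fun hmem ↦ ?_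
    have : (b 1 : K) ∈ (⊥ : IntermediateField ℚ K) := by
      rw [show (b 1 : K) = (2 * b 1 - y + y) / 2 by ring]
      exact div_mem (add_mem hmem (intCast_mem _ y)) (ofNat_mem _ 2)
    obtain ⟨m, hm⟩ := RingOfIntegers.exists_intCast_eq_of_mem_bot this
    have hrepr : b.repr (m : 𝓞 K) 1 = 0 := by
      rw [← zsmul_one, ← hb, map_zsmul, b.repr_self]; simp
    simp [← hm] at hrepr
  · have hsqK : (b 1 : K) ^ 2 = x + y * b 1 := by
      simpa using congrArg ((↑) : 𝓞 K → K) hsq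
    rw [hdiscr]
    push_cast
    linear_combination 4 * hsqK
  · rw [hdiscr]
    exact Int.modEq_iff_dvd.mpr ⟨-x, by ring⟩

theorem Int.exists_abs_le_modEq_two_mul {n : ℤ} (hn : 0 < n) (a : ℤ) :
    ∃ b, |b| ≤ n ∧ b ≡ a [ZMOD 2 * n] := by
  refine ⟨(a + n) % (2 * n) - n, abs_le.mpr ⟨?_, ?_⟩, ?_⟩
  · linarith [Int.emod_nonneg (a + n) (by omega : 2 * n ≠ 0)]
  · linarith [Int.emod_lt_of_pos (a + n) (by omega : 0 < 2 * n)]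
  · calc (a + n) % (2 * n) - n ≡ (a + n) - n [ZMOD 2 * n] := (Int.mod_modEq _ _).sub_right n
      _ = a := by ring

theorem exists_abs_le_four_mul_dvd_sq_sub {p : ℕ} [Fact p.Prime] (hodd : Odd p) {D y : ℤ}
    (hD : IsSquare (D : ZMod p)) (hy : D ≡ y ^ 2 [ZMOD 4]) :
    ∃ b : ℤ, |b| ≤ p ∧ 4 * (p : ℤ) ∣ b ^ 2 - D := by
  obtain ⟨r, hr⟩ := hD
  obtain ⟨r, rfl⟩ := ZMod.intCast_surjective r
  have hpr : (p : ℤ) ∣ r ^ 2 - D := by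
    rw [← ZMod.intCast_zmod_eq_zero_iff_dvd]
    push_cast
    rw [hr]; ring
  -- `r + p * (y - r)` is `r` mod `p` and has the parity of `y`, as `p` is odd
  obtain ⟨b, hb, hbr⟩ := Int.exists_abs_le_modEq_two_mul (n := p)
    (by exact_mod_cast (Fact.out : p.Prime).pos) (r + p * (y - r))
  obtain ⟨k, hk⟩ := hodd
  obtain ⟨t, ht⟩ := hbr.dvd
  have hk' : (p : ℤ) = 2 * k + 1 := by exact_mod_cast hk
  have hbp : (p : ℤ) ∣ b - r := ⟨y - r - 2 * t, by linear_combination -ht⟩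
  obtain ⟨u, hu⟩ : 2 ∣ b - y := ⟨-k * (r - y) - p * t, by linear_combination -ht + (y - r) * hk'⟩
  have h4 : (4 : ℤ) ∣ b ^ 2 - D := by
    obtain ⟨m, hm⟩ := hy.dvd
    exact ⟨u * (y + u) + m, by linear_combination (b + y + 2 * u) * hu + hm⟩
  have hpb : (p : ℤ) ∣ b ^ 2 - D := by
    have : b ^ 2 - D = (b - r) * (b + r) + (r ^ 2 - D) := by ring
    rw [this]
    exact dvd_add (dvd_mul_of_dvd_left hbp _) hpr
  have hcop : IsCoprime (4 : ℤ) p := by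
    rw [show (4 : ℤ) = ((2 ^ 2 : ℕ) : ℤ) by norm_num, Nat.isCoprime_iff_coprime]
    exact (Nat.coprime_two_left.mpr ⟨k, hk⟩).pow_left 2
  exact ⟨b, hb, hcop.mul_dvd h4 hpb⟩

theorem abs_le_of_eq_sq_sub_four_mul {p b c D : ℤ} (hp : 0 < p) (hb : |b| ≤ p) (hD0 : 0 ≤ D)
    (hD : D ≤ 4 * p ^ 2) (hc : D = b ^ 2 - 4 * p * c) : |c| ≤ p := by
  have := abs_le.mp hb
  refine abs_le.mpr ⟨?_, ?_⟩ <;> nlinarith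

/-- Assume that for every `ε > 0` there is `D_ε` such that every real
quadratic field discriminant `D > D_ε` admits an odd prime `p` with `(D/p) = 1` and
`(1/2)√D ≤ p ≤ (1/2 + ε)√D`. Then `limsup_{D→∞} H_min(D)/√D ≤ 1/2`: for every `ε > 0`
there is `B` such that every real quadratic field of discriminant `D > B` has a
generator `α` (with primitive minimal polynomial `a·x² + b·x + c`) with
`H(α) ≤ (1/2 + ε)·√D`. -/
theorem Hmin_real_quadratic_limsup_le_half
    (hyp : ∀ ε : ℝ, 0 < ε → ∃ Dε : ℝ,
      ∀ (K : Type) [Field K] [NumberField K],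
        Module.finrank ℚ K = 2 → 0 < NumberField.discr K →
        (NumberField.discr K : ℝ) > Dε →
        ∃ (p : ℕ) (hp : p.Prime), Odd p ∧
          @legendreSym p ⟨hp⟩ (NumberField.discr K) = 1 ∧
          (1 / 2) * Real.sqrt (NumberField.discr K : ℝ) ≤ (p : ℝ) ∧
          (p : ℝ) ≤ (1 / 2 + ε) * Real.sqrt (NumberField.discr K : ℝ)) :
    ∀ ε : ℝ, 0 < ε → ∃ B : ℝ,
      ∀ (K : Type) [Field K] [NumberField K],
        Module.finrank ℚ K = 2 → 0 < NumberField.discr K →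
        (NumberField.discr K : ℝ) > B →
        ∃ (α : K) (a b c : ℤ), ℚ⟮α⟯ = ⊤ ∧
          (a : K) * α ^ 2 + (b : K) * α + (c : K) = 0 ∧
          Int.gcd (Int.gcd a b) c = 1 ∧
          ((max |a| (max |b| |c|) : ℤ) : ℝ) ≤
            (1 / 2 + ε) * Real.sqrt (NumberField.discr K : ℝ) := by
  intro ε hε
  obtain ⟨Dε, hDε⟩ := hyp ε hε
  refine ⟨Dε, fun K _ _ h2 hpos hgt ↦ ?_⟩
  obtain ⟨p, hp, hodd, hleg, hlow, hup⟩ := hDε K h2 hpos hgt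
  have := Fact.mk hp
  have hD0 : (discr K : ZMod p) ≠ 0 := fun h ↦ by
    rw [(legendreSym.eq_zero_iff p _).mpr h] at hleg
    exact zero_ne_one hleg
  have hpD : ¬ (p : ℤ) ∣ discr K := mt (ZMod.intCast_zmod_eq_zero_iff_dvd _ p).mpr hD0
  obtain ⟨s, hs_gen, hs_sq, y, hy⟩ := exists_sq_eq_discr h2
  obtain ⟨b, hb, c, hc⟩ :=
    exists_abs_le_four_mul_dvd_sq_sub hodd ((legendreSym.eq_one_iff p hD0).mp hleg) hy
  have hD : discr K = b ^ 2 - 4 * p * c := by linear_combination -hc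
  obtain ⟨α, hα_gen, hα_root⟩ := exists_adjoin_eq_top_of_sq_eq_discrim hs_gen (a := p) (b := b)
    (c := c) (by exact_mod_cast hp.ne_zero) (by rw [hs_sq, hD, discrim]; push_cast; ring)
  have hpb : ¬ (p : ℤ) ∣ b := fun ⟨k, hk⟩ ↦ hpD ⟨p * k ^ 2 - 4 * c, by rw [hD, hk]; ring⟩
  refine ⟨α, p, b, c, hα_gen, hα_root, ?_, ?_⟩
  · rw [Int.isCoprime_iff_gcd_eq_one.mp
      ((Nat.prime_iff_prime_int.mp hp).coprime_iff_not_dvd.mpr hpb)]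
    simp
  · have hD4 : discr K ≤ 4 * (p : ℤ) ^ 2 := by
      have h := (Real.sqrt_le_left (by positivity)).mp (by linarith : √(discr K : ℝ) ≤ 2 * p)
      exact_mod_cast h.trans_eq (by ring : ((2 : ℝ) * p) ^ 2 = 4 * (p : ℝ) ^ 2)
    have hc_le := abs_le_of_eq_sq_sub_four_mul (by exact_mod_cast hp.pos) hb hpos.le hD4 hD
    have hmax : max |(p : ℤ)| (max |b| |c|) ≤ p :=
      max_le (abs_of_nonneg (Int.natCast_nonneg p)).le (max_le hb hc_le)
    exact le_trans (by exact_mod_cast hmax) hup
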